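/- arXiv:2507.10701 — 3 statements merged into one kernel-verified Lean document; each statement's English description precedes it below -/
import Mathlib

section
/- Let N ≥ 1, K ∈ ℝ^{N×N} symmetric positive semidefinite, λ > 0, η ≥ 0, and let e_N = (1/√N)(1,…,1)ᵀ ∈ ℝ^N and 𝟙_N the all-ones vector. Set A := λ·Id_N + (η/N)·K. Then A is symmetric positive definite (hence invertible), e_Nᵀ A⁻¹ e_N > 0, and α* := √N · A⁻¹ e_N / (λ · e_Nᵀ A⁻¹ e_N) satisfies (λ·Id_N + η·Ξ) α* = 𝟙_N, where Ξ := (1/N)(Id_N − e_N e_Nᵀ) K is the matrix representing the empirical covariance operator. -/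
open Matrix

lemma vecMulVec_mulVec_aux {N : ℕ} (a b w : Fin N → ℝ) :
    vecMulVec a b *ᵥ w = (b ⬝ᵥ w) • a := by
  funext i
  simp only [mulVec, dotProduct, vecMulVec_apply, Pi.smul_apply, smul_eq_mul,
    Finset.sum_mul]
  rw [Finset.sum_congr rfl (fun j _ => by ring : ∀ j ∈ Finset.univ, a i * b j * w j = b j * w j * a i)]

/-- Spectral representation of the optimal mean-variance weights: with `K` symmetric PSD,
`lam > 0`, `η ≥ 0`, `A = lam·Id + (η/N)·K` is positive definite (hence invertible),
`eᵀ A⁻¹ e > 0`, and `α* = √N · A⁻¹ e / (lam · eᵀ A⁻¹ e)` solves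
`(lam·Id + η·Ξ) α* = 𝟙` where `Ξ = (1/N)(Id − e eᵀ) K`. -/
theorem stmt6 (N : ℕ) (hN : 1 ≤ N) (K : Matrix (Fin N) (Fin N) ℝ) (hK : K.PosSemidef)
    (lam η : ℝ) (hlam : 0 < lam) (hη : 0 ≤ η) :
    let e : Fin N → ℝ := fun _ => 1 / Real.sqrt N
    let A : Matrix (Fin N) (Fin N) ℝ := lam • 1 + (η / N) • K
    let Ξ : Matrix (Fin N) (Fin N) ℝ := (1 / (N : ℝ)) • ((1 - vecMulVec e e) * K)
    A.PosDef ∧ 0 < e ⬝ᵥ (A⁻¹ *ᵥ e) ∧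
      (lam • (1 : Matrix (Fin N) (Fin N) ℝ) + η • Ξ) *ᵥ
          ((Real.sqrt N / (lam * (e ⬝ᵥ (A⁻¹ *ᵥ e)))) • (A⁻¹ *ᵥ e))
        = fun _ => (1 : ℝ) := by
  intro e A Ξ
  have hN0 : (0 : ℝ) < N := by exact_mod_cast hN
  have hsqrt : (0 : ℝ) < Real.sqrt N := Real.sqrt_pos.mpr hN0
  have hsq : Real.sqrt N * Real.sqrt N = N := Real.mul_self_sqrt hN0.le
  -- e ⬝ e = 1
  have hee : e ⬝ᵥ e = 1 := by
    simp only [dotProduct, e]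
    rw [Finset.sum_const, Finset.card_univ, Fintype.card_fin]
    field_simp
    rw [nsmul_eq_mul, Real.sq_sqrt hN0.le, mul_one_div_cancel hN0.ne']
  -- PosDef of A
  have h1 : (lam • (1 : Matrix (Fin N) (Fin N) ℝ)).PosDef := by
    refine ⟨by simp [Matrix.IsHermitian], fun x hx => ?_⟩
    exact (Matrix.PosDef.one.smul hlam).2 hx
  have h2 : ((η / N) • K).PosSemidef := by
    refine ⟨by simpa [Matrix.IsHermitian] using congrArg (fun M => (η / N) • M) hK.1, fun x => ?_⟩
    have := hK.2 x
    have hc : 0 ≤ η / N := div_nonneg hη hN0.le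
    exact (hK.smul hc).2 x
  have hA : A.PosDef := h1.add_posSemidef h2
  refine ⟨hA, ?_, ?_⟩
  · -- e ≠ 0
    have he0 : e ≠ 0 := by
      intro h
      have := congrFun h ⟨0, hN⟩
      simp only [e, Pi.zero_apply] at this
      exact (one_div_ne_zero hsqrt.ne') this
    have := hA.inv.dotProduct_mulVec_pos he0
    simpa using this
  · -- main identity
    haveI := hA.isUnit.invertible
    set v : Fin N → ℝ := A⁻¹ *ᵥ e with hv
    set s : ℝ := e ⬝ᵥ v with hs
    have hspos : 0 < s := by
      have he0 : e ≠ 0 := by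
        intro h
        have := congrFun h ⟨0, hN⟩
        simp only [e, Pi.zero_apply] at this
        exact (one_div_ne_zero hsqrt.ne') this
      simpa using hA.inv.dotProduct_mulVec_pos he0
    have hAv : A *ᵥ v = e := by
      rw [hv, mulVec_mulVec, Matrix.mul_inv_of_invertible, one_mulVec]
    have hKv : (η / N) • (K *ᵥ v) = e - lam • v := by
      have : lam • v + (η / N) • (K *ᵥ v) = e := by
        rw [← hAv]
        simp [A, add_mulVec, smul_mulVec, one_mulVec]
      rw [← this]; abel
    have hKe : e ⬝ᵥ ((η / N) • (K *ᵥ v)) = 1 - lam * s := by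
      rw [hKv, dotProduct_sub, hee, dotProduct_smul]
      simp [hs, smul_eq_mul]
    -- compute Ξ *ᵥ v
    have hΞv : η • (Ξ *ᵥ v) = (η / N) • (K *ᵥ v) - (1 - lam * s) • e := by
      have h1' : Ξ *ᵥ v = (1 / (N : ℝ)) • (K *ᵥ v - (e ⬝ᵥ (K *ᵥ v)) • e) := by
        simp only [Ξ, smul_mulVec, sub_mul, one_mul, sub_mulVec, mulVec_mulVec]
        rw [← mulVec_mulVec, vecMulVec_mulVec_aux]
      rw [h1', smul_smul]
      have hηN : η * (1 / (N : ℝ)) = η / N := by ring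
      rw [hηN, smul_sub, smul_smul]
      congr 1
      have : η / N * (e ⬝ᵥ (K *ᵥ v)) = e ⬝ᵥ ((η / N) • (K *ᵥ v)) := by
        rw [dotProduct_smul]; simp [smul_eq_mul]
      rw [this, hKe]
    have hMv : (lam • (1 : Matrix (Fin N) (Fin N) ℝ) + η • Ξ) *ᵥ v = (lam * s) • e := by
      rw [add_mulVec, smul_mulVec, one_mulVec, smul_mulVec, hΞv, hKv]
      funext i
      simp only [Pi.add_apply, Pi.sub_apply, Pi.smul_apply, smul_eq_mul]
      ring
    rw [mulVec_smul, hMv, smul_smul]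
    have hls : lam * s ≠ 0 := (mul_pos hlam hspos).ne'
    have : Real.sqrt N / (lam * s) * (lam * s) = Real.sqrt N := by
      field_simp
    rw [this]
    funext i
    simp only [Pi.smul_apply, smul_eq_mul, e]
    field_simp
end

section
/- Let y, η, z be square-integrable real random variables on a probability space with Var(y) = σ_y² > 0, Var(η) = σ_η² > 0, Var(z) = σ_z² > 0, Cov(y, η) = ρ_{yη} σ_y σ_η for some ρ_{yη} ∈ (0, 1], and Cov(y, z) = Cov(η, z) = 0. Let ρ ∈ (0, ρ_{yη}] and define ŷ := ρ σ_y ( (ρ/ρ_{yη}) η/σ_η + (1/σ_z) √(1 − ρ²/ρ_{yη}²) z ). Then Var(y − ŷ) = (1 − ρ²) σ_y², and consequently R² := 1 − Var(y − ŷ)/Var(y) = (2 Cov(y, ŷ) − Var(ŷ))/Var(y) = ρ². -/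
open MeasureTheory

/-- Covariance of two real random variables: `Cov(f,g) = 𝔼[fg] − 𝔼[f]𝔼[g]`. -/
noncomputable def cov {Ω : Type*} [MeasurableSpace Ω] (P : Measure Ω) (f g : Ω → ℝ) : ℝ :=
  (∫ ω, f ω * g ω ∂P) - (∫ ω, f ω ∂P) * (∫ ω, g ω ∂P)

lemma int_mul {Ω : Type*} [MeasurableSpace Ω] {P : Measure Ω} {f g : Ω → ℝ}
    (hf : MemLp f 2 P) (hg : MemLp g 2 P) :
    Integrable (fun ω => f ω * g ω) P := by
  have h : (fun ω => f ω * g ω)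
      = fun ω => 2⁻¹ * (((f ω + g ω) ^ 2 - f ω ^ 2) - g ω ^ 2) := by
    funext ω; ring
  rw [h]
  exact (((hf.add hg).integrable_sq.sub hf.integrable_sq).sub hg.integrable_sq).const_mul _

lemma cov_comm {Ω : Type*} [MeasurableSpace Ω] (P : Measure Ω) (f g : Ω → ℝ) :
    cov P f g = cov P g f := by
  unfold cov
  simp_rw [mul_comm (f _) (g _), mul_comm (∫ ω, f ω ∂P)]

lemma cov_const_mul_left {Ω : Type*} [MeasurableSpace Ω] (P : Measure Ω) (c : ℝ) (f g : Ω → ℝ) :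
    cov P (fun ω => c * f ω) g = c * cov P f g := by
  unfold cov
  simp_rw [mul_assoc, integral_const_mul]
  ring

lemma cov_add_left {Ω : Type*} [MeasurableSpace Ω] {P : Measure Ω} [IsProbabilityMeasure P]
    {f g h : Ω → ℝ} (hf : MemLp f 2 P) (hg : MemLp g 2 P) (hh : MemLp h 2 P) :
    cov P (fun ω => f ω + g ω) h = cov P f h + cov P g h := by
  unfold cov
  simp_rw [add_mul]
  rw [integral_add (int_mul hf hh) (int_mul hg hh),
    integral_add (hf.integrable one_le_two) (hg.integrable one_le_two)]
  ring

lemma cov_comb_left {Ω : Type*} [MeasurableSpace Ω] {P : Measure Ω} [IsProbabilityMeasure P]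
    {f g k : Ω → ℝ} (hf : MemLp f 2 P) (hg : MemLp g 2 P) (hk : MemLp k 2 P) (a b : ℝ) :
    cov P (fun ω => a * f ω + b * g ω) k = a * cov P f k + b * cov P g k := by
  rw [cov_add_left (hf.const_mul a) (hg.const_mul b) hk, cov_const_mul_left,
    cov_const_mul_left]

lemma cov_comb_right {Ω : Type*} [MeasurableSpace Ω] {P : Measure Ω} [IsProbabilityMeasure P]
    {f g k : Ω → ℝ} (hf : MemLp f 2 P) (hg : MemLp g 2 P) (hk : MemLp k 2 P) (a b : ℝ) :
    cov P k (fun ω => a * f ω + b * g ω) = a * cov P k f + b * cov P k g := by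
  rw [cov_comm, cov_comb_left hf hg hk, cov_comm P f k, cov_comm P g k]

/-- Property 3 of the correlated admissible prediction: `Var(y − ŷ) = (1 − ρ²)σ_y²`, and
consequently `R² = 1 − Var(y − ŷ)/Var(y) = (2Cov(y,ŷ) − Var(ŷ))/Var(y) = ρ²`. -/
theorem stmt11 {Ω : Type*} [MeasurableSpace Ω] (P : Measure Ω) [IsProbabilityMeasure P]
    (y η z : Ω → ℝ) (hy : MemLp y 2 P) (hη : MemLp η 2 P) (hz : MemLp z 2 P)
    (σy ση σz ρyη ρ : ℝ) (hσy : 0 < σy) (hση : 0 < ση) (hσz : 0 < σz)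
    (hvy : cov P y y = σy ^ 2) (hvη : cov P η η = ση ^ 2) (hvz : cov P z z = σz ^ 2)
    (hyη : cov P y η = ρyη * σy * ση) (hρyη0 : 0 < ρyη) (hρyη1 : ρyη ≤ 1)
    (hyz : cov P y z = 0) (hηz : cov P η z = 0)
    (hρ0 : 0 < ρ) (hρ : ρ ≤ ρyη) :
    let yhat : Ω → ℝ := fun ω =>
      ρ * σy * ((ρ / ρyη) * (η ω / ση)
        + (1 / σz) * Real.sqrt (1 - ρ ^ 2 / ρyη ^ 2) * z ω)
    cov P (fun ω => y ω - yhat ω) (fun ω => y ω - yhat ω) = (1 - ρ ^ 2) * σy ^ 2 ∧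
    1 - cov P (fun ω => y ω - yhat ω) (fun ω => y ω - yhat ω) / cov P y y = ρ ^ 2 ∧
    (2 * cov P y yhat - cov P yhat yhat) / cov P y y = ρ ^ 2 := by
  intro yhat
  set a : ℝ := ρ * σy * (ρ / ρyη) / ση with ha
  set b : ℝ := ρ * σy * (1 / σz) * Real.sqrt (1 - ρ ^ 2 / ρyη ^ 2) with hb
  have hsq : (0:ℝ) ≤ 1 - ρ ^ 2 / ρyη ^ 2 := by
    rw [sub_nonneg, div_le_one (by positivity)]
    exact pow_le_pow_left₀ hρ0.le hρ 2
  have hb2 : b ^ 2 = ρ ^ 2 * σy ^ 2 * (1 / σz ^ 2) * (1 - ρ ^ 2 / ρyη ^ 2) := by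
    rw [hb]
    rw [mul_pow, Real.sq_sqrt hsq]
    ring
  have hyhat : yhat = fun ω => a * η ω + b * z ω := by
    funext ω; simp only [yhat, ha, hb]; ring
  have hmem' : MemLp (fun ω => a * η ω + b * z ω) 2 P :=
    (hη.const_mul a).add (hz.const_mul b)
  have hmem : MemLp yhat 2 P := by rw [hyhat]; exact hmem'
  -- cov y yhat
  have c1 : cov P y yhat = ρ ^ 2 * σy ^ 2 := by
    rw [hyhat, cov_comb_right hη hz hy, hyη, hyz, ha]
    field_simp
    ring
  -- cov yhat yhat
  have c2 : cov P yhat yhat = ρ ^ 2 * σy ^ 2 := by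
    rw [hyhat, cov_comb_left hη hz hmem']
    rw [cov_comb_right hη hz hη, cov_comb_right hη hz hz,
      hvη, hvz, hηz, cov_comm P z η, hηz]
    rw [show a * (a * ση ^ 2 + b * 0) + b * (a * 0 + b * σz ^ 2)
        = a ^ 2 * ση ^ 2 + b ^ 2 * σz ^ 2 by ring, hb2, ha]
    field_simp
    ring
  have hsub : (fun ω => y ω - yhat ω) = fun ω => (1:ℝ) * y ω + (-1 : ℝ) * yhat ω := by
    funext ω; ring
  have c3 : cov P (fun ω => y ω - yhat ω) (fun ω => y ω - yhat ω) = (1 - ρ ^ 2) * σy ^ 2 := by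
    have hmem2 : MemLp (fun ω => (1:ℝ) * y ω + (-1:ℝ) * yhat ω) 2 P :=
      (hy.const_mul 1).add (hmem.const_mul (-1))
    rw [hsub, cov_comb_left hy hmem hmem2,
      cov_comb_right hy hmem hy, cov_comb_right hy hmem hmem,
      hvy, c1, c2, cov_comm P yhat y, c1]
    ring
  have hσy2 : σy ^ 2 ≠ 0 := by positivity
  refine ⟨c3, ?_, ?_⟩
  · rw [c3, hvy]; field_simp; ring
  · rw [c1, c2, hvy]; field_simp; ring
end

section
/- Let H be a real Hilbert space, N ≥ 1, φ_1,…,φ_N ∈ H, y ∈ ℝ^N and λ > 0. Let G ∈ ℝ^{N×N} be the Gram matrix G_{ij} = ⟪φ_i, φ_j⟫. Then G is symmetric positive semidefinite, G + λ·Id_N is invertible, and with α := (G + λ·Id_N)⁻¹ y the element w* := Σ_{i=1}^N α_i φ_i is the unique global minimizer over H of the ridge regression functional F(w) = Σ_{i=1}^N (⟪w, φ_i⟫ − y_i)² + λ ‖w‖². -/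
open Matrix
open scoped BigOperators InnerProductSpace

/-- Kernel ridge regression representer: the Gram matrix `G` of feature vectors `φ_i` is
symmetric PSD, `G + lam·Id` is invertible, and with `α = (G + lam·Id)⁻¹ y` the element
`w* = Σ α_i φ_i` is the unique global minimizer of
`F(w) = Σ (⟪w, φ_i⟫ − y_i)² + lam‖w‖²`. -/
theorem stmt16 {H : Type*} [NormedAddCommGroup H] [InnerProductSpace ℝ H] [CompleteSpace H]
    (N : ℕ) (hN : 1 ≤ N) (φ : Fin N → H) (y : Fin N → ℝ) (lam : ℝ) (hlam : 0 < lam) :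
    let G : Matrix (Fin N) (Fin N) ℝ := Matrix.of fun i j => ⟪φ i, φ j⟫_ℝ
    let F : H → ℝ := fun w => (∑ i, (⟪w, φ i⟫_ℝ - y i) ^ 2) + lam * ‖w‖ ^ 2
    G.PosSemidef ∧
    IsUnit (G + lam • (1 : Matrix (Fin N) (Fin N) ℝ)) ∧
    (let α : Fin N → ℝ := (G + lam • (1 : Matrix (Fin N) (Fin N) ℝ))⁻¹ *ᵥ y
     let wstar : H := ∑ i, α i • φ i
     (∀ w : H, F wstar ≤ F w) ∧ (∀ w : H, F w = F wstar → w = wstar)) := by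
  intro G F
  -- dot product identity
  have hdot : ∀ x : Fin N → ℝ, dotProduct x (G *ᵥ x) = ‖∑ i, x i • φ i‖ ^ 2 := by
    intro x
    rw [← real_inner_self_eq_norm_sq, sum_inner]
    simp only [dotProduct, mulVec, dotProduct, G, Matrix.of_apply]
    refine Finset.sum_congr rfl fun i _ => ?_
    simp only [real_inner_smul_left, inner_sum, real_inner_smul_right, Finset.mul_sum]
    refine Finset.sum_congr rfl fun j _ => by ring
  have hPSD : G.PosSemidef := by
    rw [Matrix.posSemidef_iff_dotProduct_mulVec]
    constructor
    · ext i j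
      simp [G, Matrix.conjTranspose_apply, real_inner_comm]
    · intro x
      simp only [star_trivial]
      rw [hdot]
      positivity
  have hPD : (G + lam • (1 : Matrix (Fin N) (Fin N) ℝ)).PosDef := by
    rw [Matrix.posDef_iff_dotProduct_mulVec]
    constructor
    · refine hPSD.1.add ?_
      show (lam • (1 : Matrix (Fin N) (Fin N) ℝ))ᴴ = _
      simp
    · intro x hx
      simp only [star_trivial, Matrix.add_mulVec, dotProduct_add,
        Matrix.smul_mulVec, Matrix.one_mulVec, dotProduct_smul, smul_eq_mul]
      have h1 : 0 ≤ dotProduct x (G *ᵥ x) := by rw [hdot]; positivity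
      have h2 : 0 < dotProduct x x := by
        refine lt_of_le_of_ne (Finset.sum_nonneg fun j _ => mul_self_nonneg _) ?_
        intro h
        exact hx (dotProduct_self_eq_zero.mp h.symm)
      nlinarith
  have hUnit : IsUnit (G + lam • (1 : Matrix (Fin N) (Fin N) ℝ)) := hPD.isUnit
  refine ⟨hPSD, hUnit, ?_⟩
  intro α wstar
  -- the linear system
  have hsys : (G + lam • (1 : Matrix (Fin N) (Fin N) ℝ)) *ᵥ α = y := by
    show (G + lam • 1) *ᵥ ((G + lam • 1)⁻¹ *ᵥ y) = y
    rw [Matrix.mulVec_mulVec, Matrix.mul_nonsing_inv _ ((Matrix.isUnit_iff_isUnit_det _).mp hUnit),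
      Matrix.one_mulVec]
  have hcomp : ∀ i, (G *ᵥ α) i + lam * α i = y i := by
    intro i
    have := congrFun hsys i
    simpa [Matrix.add_mulVec, Matrix.smul_mulVec, Matrix.one_mulVec] using this
  have hinner : ∀ i, ⟪wstar, φ i⟫_ℝ = (G *ᵥ α) i := by
    intro i
    show ⟪∑ j, α j • φ j, φ i⟫_ℝ = _
    rw [sum_inner]
    simp only [mulVec, dotProduct, G, Matrix.of_apply]
    refine Finset.sum_congr rfl fun j _ => ?_
    rw [real_inner_smul_left, real_inner_comm, mul_comm]
  have hkey : ∀ i, ⟪wstar, φ i⟫_ℝ - y i = -(lam * α i) := by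
    intro i
    rw [hinner i, ← hcomp i]; ring
  -- the fundamental identity
  have hvu : ∀ w : H, ⟪wstar, w - wstar⟫_ℝ = ∑ i, α i * ⟪w - wstar, φ i⟫_ℝ := by
    intro w
    show ⟪∑ j, α j • φ j, w - wstar⟫_ℝ = _
    rw [sum_inner]
    refine Finset.sum_congr rfl fun j _ => ?_
    rw [real_inner_smul_left, real_inner_comm]
  have hF : ∀ w : H, F w = F wstar + (∑ i, (⟪w - wstar, φ i⟫_ℝ) ^ 2) + lam * ‖w - wstar‖ ^ 2 := by
    intro w
    have hnorm : ‖w‖ ^ 2 = ‖wstar‖ ^ 2 + 2 * ⟪wstar, w - wstar⟫_ℝ + ‖w - wstar‖ ^ 2 := by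
      have h := norm_add_sq_real wstar (w - wstar)
      rwa [add_sub_cancel] at h
    have hsum : ∑ i, (⟪w, φ i⟫_ℝ - y i) ^ 2
        = ∑ i, ((⟪wstar, φ i⟫_ℝ - y i) ^ 2 + (⟪w - wstar, φ i⟫_ℝ) ^ 2
            - 2 * lam * (α i * ⟪w - wstar, φ i⟫_ℝ)) := by
      refine Finset.sum_congr rfl fun i _ => ?_
      have h1 : ⟪w, φ i⟫_ℝ = ⟪wstar, φ i⟫_ℝ + ⟪w - wstar, φ i⟫_ℝ := by
        rw [inner_sub_left]; ring
      rw [h1]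
      have h2 := hkey i
      linear_combination 2 * ⟪w - wstar, φ i⟫_ℝ * h2
    show (∑ i, (⟪w, φ i⟫_ℝ - y i) ^ 2) + lam * ‖w‖ ^ 2 = _
    rw [hsum, hnorm, hvu w]
    simp only [Finset.sum_sub_distrib, Finset.sum_add_distrib, ← Finset.mul_sum, F]
    ring
  constructor
  · intro w
    rw [hF w]
    have h1 : 0 ≤ ∑ i, (⟪w - wstar, φ i⟫_ℝ) ^ 2 := Finset.sum_nonneg fun i _ => sq_nonneg _
    have h2 : 0 ≤ lam * ‖w - wstar‖ ^ 2 := by positivity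
    linarith
  · intro w hw
    rw [hF w] at hw
    have h1 : 0 ≤ ∑ i, (⟪w - wstar, φ i⟫_ℝ) ^ 2 := Finset.sum_nonneg fun i _ => sq_nonneg _
    have h2 : 0 ≤ ‖w - wstar‖ ^ 2 := sq_nonneg _
    have h3 : ‖w - wstar‖ ^ 2 = 0 := by nlinarith
    have h4 : w - wstar = 0 := by
      rw [pow_eq_zero_iff (n := 2) (by norm_num)] at h3
      exact norm_eq_zero.mp h3
    exact sub_eq_zero.mp h4
end
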